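/- Let A be a unital complex C*-algebra and let a, b ∈ A with a selfadjoint. Then exp(i·a)·b − b·exp(i·a) = i · ∫₀¹ exp(s·i·a) · (a·b − b·a) · exp((1−s)·i·a) ds, where exp is the exponential in A and the integral is the Bochner (interval) integral of the continuous map s ↦ exp(s·i·a)·(ab − ba)·exp((1−s)·i·a). -/

import Mathlib

open NormedSpace

section Duhamel

variable {A : Type*} [NormedRing A] [NormedAlgebra ℝ A] [CompleteSpace A]

theorem continuous_exp_smul_mul_mul_exp_one_sub_smul (x c : A) :
    Continuous fun s : ℝ => exp (s • x) * c * exp ((1 - s) • x) :=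
  ((differentiable_exp_smul_const ℝ x).continuous.mul continuous_const).mul
    ((differentiable_exp_smul_const ℝ x).continuous.comp (continuous_const.sub continuous_id))

theorem hasDerivAt_exp_smul_mul_mul_exp_one_sub_smul (x b : A) (s : ℝ) :
    HasDerivAt (fun t : ℝ => exp (t • x) * b * exp ((1 - t) • x))
      (exp (s • x) * (x * b - b * x) * exp ((1 - s) • x)) s := by
  have hleft : HasDerivAt (fun t : ℝ => exp (t • x)) (exp (s • x) * x) s :=
    hasDerivAt_exp_smul_const x s
  have hright : HasDerivAt (fun t : ℝ => exp ((1 - t) • x)) (-(x * exp ((1 - s) • x))) s := by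
    simpa [Function.comp_def] using
      (hasDerivAt_exp_smul_const' x (1 - s)).scomp s ((hasDerivAt_id s).const_sub 1)
  refine ((hleft.mul_const b).mul hright).congr_deriv ?_
  noncomm_ring

theorem exp_mul_sub_mul_exp_eq_integral (x b : A) :
    exp x * b - b * exp x =
      ∫ s in (0 : ℝ)..1, exp (s • x) * (x * b - b * x) * exp ((1 - s) • x) := by
  rw [intervalIntegral.integral_eq_sub_of_hasDerivAt
    (fun s _ => hasDerivAt_exp_smul_mul_mul_exp_one_sub_smul x b s)
    ((continuous_exp_smul_mul_mul_exp_one_sub_smul x _).intervalIntegrable 0 1)]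
  simp

end Duhamel

theorem duhamel_commutator_exp
    {A : Type*} [CStarAlgebra A] (a b : A) :
    NormedSpace.exp (Complex.I • a) * b - b * NormedSpace.exp (Complex.I • a)
      = Complex.I •
        ∫ s in (0:ℝ)..1,
          NormedSpace.exp (((s : ℂ) * Complex.I) • a) * (a * b - b * a) *
            NormedSpace.exp ((((1 : ℂ) - (s : ℂ)) * Complex.I) • a) := by
  have hcommutator : Complex.I • a * b - b * Complex.I • a = Complex.I • (a * b - b * a) := by
    rw [smul_mul_assoc, mul_smul_comm, smul_sub]
  rw [exp_mul_sub_mul_exp_eq_integral, hcommutator, ← intervalIntegral.integral_smul]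
  refine intervalIntegral.integral_congr fun s _ => ?_
  have hone_sub : ((1 : ℂ) - (s : ℂ)) = ((1 - s : ℝ) : ℂ) := by push_cast; ring
  simp only [hone_sub, mul_smul, Complex.coe_smul, mul_smul_comm, smul_mul_assoc]
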